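/- Let V be a finite-dimensional real inner product space and V = A ⊕ B a (not necessarily orthogonal) direct sum of subspaces. Let Q be the orthogonal projection onto Aᗮ and R the orthogonal projection onto Bᗮ, and define T = (I − Q)∘R + Q. Then T is invertible, T maps A isomorphically onto itself, and T maps B isomorphically onto Aᗮ. -/

import Mathlib

/-- Abstract content of Lemma 3: with `V = A ⊕ B`, `Q` the orthogonal
projection onto `Aᗮ`, `R` the orthogonal projection onto `Bᗮ`, the map
`T = (I − Q)∘R + Q` is invertible, maps `A` isomorphically onto itself and
`B` isomorphically onto `Aᗮ`; in particular `T(A) ⟂ T(B)`. -/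
theorem T_map_invertible
    {V : Type*} [NormedAddCommGroup V] [InnerProductSpace ℝ V]
    [FiniteDimensional ℝ V]
    (A B : Submodule ℝ V) (hAB : A ⊓ B = ⊥) (hAB' : A ⊔ B = ⊤)
    (Q R : V →ₗ[ℝ] V)
    (hQ : ∀ v, Q v = (Submodule.orthogonalProjectionOnto Aᗮ v : V))
    (hR : ∀ v, R v = (Submodule.orthogonalProjectionOnto Bᗮ v : V))
    (T : V →ₗ[ℝ] V) (hT : T = (LinearMap.id - Q) ∘ₗ R + Q) :
    Function.Bijective T ∧
      Submodule.map T A = A ∧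
      Submodule.map T B = Aᗮ ∧
      (∀ a ∈ Submodule.map T A, ∀ b ∈ Submodule.map T B, (inner ℝ a b : ℝ) = 0) := by
  -- basic facts about the projections
  have hQmem : ∀ v, Q v ∈ Aᗮ := fun v => by rw [hQ]; exact (Submodule.orthogonalProjectionOnto Aᗮ v).2
  have hRmem : ∀ v, R v ∈ Bᗮ := fun v => by rw [hR]; exact (Submodule.orthogonalProjectionOnto Bᗮ v).2
  have hIQ : ∀ v, v - Q v ∈ A := fun v => by
    have := Submodule.sub_starProjection_mem_orthogonal (K := Aᗮ) v
    rw [Submodule.orthogonal_orthogonal] at this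
    rw [hQ]; exact this
  have hIR : ∀ v, v - R v ∈ B := fun v => by
    have := Submodule.sub_starProjection_mem_orthogonal (K := Bᗮ) v
    rw [Submodule.orthogonal_orthogonal] at this
    rw [hR]; exact this
  have hQ0 : ∀ a ∈ A, Q a = 0 := fun a ha => by
    rw [hQ]
    exact_mod_cast congrArg Subtype.val
      (Submodule.orthogonalProjectionOnto_eq_zero_iff.mpr (A.le_orthogonal_orthogonal ha))
  have hR0 : ∀ b ∈ B, R b = 0 := fun b hb => by
    rw [hR]
    exact_mod_cast congrArg Subtype.val
      (Submodule.orthogonalProjectionOnto_eq_zero_iff.mpr (B.le_orthogonal_orthogonal hb))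
  have hTapp : ∀ v, T v = (R v - Q (R v)) + Q v := fun v => by
    simp [hT, LinearMap.sub_apply, LinearMap.comp_apply]
  -- injectivity
  have hinj : Function.Injective T := by
    rw [← LinearMap.ker_eq_bot, Submodule.eq_bot_iff]
    intro v hv
    have hv0 : (R v - Q (R v)) + Q v = 0 := by
      rw [← hTapp]; exact hv
    have hx : R v - Q (R v) ∈ A := hIQ (R v)
    have hy : Q v ∈ Aᗮ := hQmem v
    have hxA : R v - Q (R v) ∈ Aᗮ := by
      have : R v - Q (R v) = -(Q v) := by
        rw [eq_neg_iff_add_eq_zero]; exact hv0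
      rw [this]; exact Aᗮ.neg_mem hy
    have hx0 : R v - Q (R v) = 0 := by
      have := Submodule.orthogonal_disjoint A
      exact (Submodule.disjoint_def.mp this) _ hx hxA
    have hy0 : Q v = 0 := by
      have := hv0; rw [hx0, zero_add] at this; exact this
    -- Q v = 0 means v ∈ A
    have hvA : v ∈ A := by
      have : v - Q v ∈ A := hIQ v
      rwa [hy0, sub_zero] at this
    -- R v ∈ Aᗮ
    have hRvA : R v ∈ Aᗮ := by
      have : R v = Q (R v) := by
        have := hx0; rwa [sub_eq_zero] at this
      rw [this]; exact hQmem (R v)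
    -- show R v = 0
    have h1 : (inner ℝ (R v) v : ℝ) = 0 := by
      rw [real_inner_comm]
      exact (Submodule.mem_orthogonal A (R v)).mp hRvA v hvA
    have h2 : (inner ℝ (R v) (v - R v) : ℝ) = 0 := by
      rw [real_inner_comm]
      exact (Submodule.mem_orthogonal B (R v)).mp (hRmem v) (v - R v) (hIR v)
    have hRv0 : R v = 0 := by
      have : (inner ℝ (R v) (R v) : ℝ) = 0 := by
        have := h2
        rw [inner_sub_right] at this
        linarith [h1, this]
      exact inner_self_eq_zero.mp this
    have hvB : v ∈ B := by
      have := hIR v; rwa [hRv0, sub_zero] at this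
    have : v ∈ A ⊓ B := ⟨hvA, hvB⟩
    rwa [hAB] at this
  have hbij : Function.Bijective T :=
    ⟨hinj, (LinearMap.injective_iff_surjective).mp hinj⟩
  -- the linear equivalence
  let e : V ≃ₗ[ℝ] V := LinearEquiv.ofBijective T hbij
  have he : (e : V →ₗ[ℝ] V) = T := rfl
  -- T maps A into A, B into Aᗮ
  have hTA : Submodule.map T A ≤ A := by
    rintro _ ⟨a, ha, rfl⟩
    rw [hTapp, hQ0 a ha, add_zero]
    exact hIQ (R a)
  have hTB : Submodule.map T B ≤ Aᗮ := by
    rintro _ ⟨b, hb, rfl⟩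
    rw [hTapp, hR0 b hb]
    simp only [map_zero, sub_zero, zero_sub, zero_add]
    exact hQmem b
  -- dimension counting
  have hfinA : Module.finrank ℝ (Submodule.map T A) = Module.finrank ℝ A := by
    rw [← he]; exact e.finrank_map_eq A
  have hfinB : Module.finrank ℝ (Submodule.map T B) = Module.finrank ℝ B := by
    rw [← he]; exact e.finrank_map_eq B
  have hdim : Module.finrank ℝ B = Module.finrank ℝ Aᗮ := by
    have h1 := Submodule.finrank_sup_add_finrank_inf_eq A B
    rw [hAB, hAB'] at h1
    have h2 := Submodule.finrank_add_finrank_orthogonal (K := A)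
    simp only [finrank_bot, finrank_top] at h1
    omega
  have hmapA : Submodule.map T A = A :=
    Submodule.eq_of_le_of_finrank_eq hTA hfinA
  have hmapB : Submodule.map T B = Aᗮ :=
    Submodule.eq_of_le_of_finrank_eq hTB (by rw [hfinB, hdim])
  refine ⟨hbij, hmapA, hmapB, ?_⟩
  intro a ha b hb
  rw [hmapA] at ha
  rw [hmapB] at hb
  exact (Submodule.mem_orthogonal A b).mp hb a ha
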